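/- Let (S, Σ, 𝒫) be a probability space, λ < 0, and ψ: S → ℝ a bounded measurable function with inf_S ψ > 0. Then ( ∫_S ψ^λ d𝒫 )^{1/λ} = inf { ( ∫_S ψ dQ ) · ( ∫_S (dQ/d𝒫)^{λ/(λ−1)} d𝒫 )^{(1−λ)/λ} : Q a probability measure on (S,Σ) with Q ≪ 𝒫 }. The infimum is attained at the measure dQ* ∝ ψ^{λ−1} d𝒫. -/

import Mathlib

open MeasureTheory ProbabilityTheory Real
open scoped ENNReal

/-!
Write `p = l / (l - 1) ∈ (0, 1)` and `f = dQ/dP`. Hölder's inequality with exponents `1` and `-l`,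
applied to `f ψ` and `ψ⁻¹` (whose product is `f`), gives
`(∫ f^p dP)^(1/p) ≤ (∫ ψ dQ) · (∫ ψ^l dP)^(-1/l)`, which rearranges to the lower bound
`(∫ ψ^l dP)^(1/l) ≤ (∫ ψ dQ) · (∫ f^p dP)^((1-l)/l)`. Hölder is an equality when `f ∝ ψ^(l-1)`,
and for that density both sides are computed explicitly.
-/

section

variable {α : Type*} [MeasurableSpace α] {μ : Measure α} {ψ : α → ℝ}

theorem ENNReal.rpow_neg_le_mul_rpow_neg_of_rpow_le_mul_rpow {a b c : ℝ≥0∞} {s t : ℝ}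
    (ha0 : a ≠ 0) (hatop : a ≠ ⊤) (hc0 : c ≠ 0) (hctop : c ≠ ⊤) (h : a ^ s ≤ b * c ^ t) :
    c ^ (-t) ≤ b * a ^ (-s) :=
  calc c ^ (-t) = c ^ (-t) * a ^ s * a ^ (-s) := by
        rw [mul_assoc, ← ENNReal.rpow_add _ _ ha0 hatop, add_neg_cancel, ENNReal.rpow_zero,
          mul_one]
    _ ≤ c ^ (-t) * (b * c ^ t) * a ^ (-s) := by gcongr
    _ = b * a ^ (-s) := by
        rw [mul_left_comm, ← ENNReal.rpow_add _ _ hc0 hctop, neg_add_cancel, ENNReal.rpow_zero,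
          mul_one]

theorem lintegral_rpow_ne_top_of_lintegral_ne_top [IsFiniteMeasure μ] {f : α → ℝ≥0∞} {p : ℝ}
    (hp0 : 0 ≤ p) (hp1 : p ≤ 1) (hf : ∫⁻ x, f x ∂μ ≠ ⊤) : ∫⁻ x, f x ^ p ∂μ ≠ ⊤ := by
  refine ne_top_of_le_ne_top (b := ∫⁻ x, 1 + f x ∂μ) ?_ (lintegral_mono fun x => ?_)
  · rw [lintegral_add_left measurable_const, lintegral_const, one_mul]
    exact ENNReal.add_ne_top.2 ⟨measure_ne_top μ _, hf⟩
  · rcases le_total (f x) 1 with h | h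
    · exact (ENNReal.rpow_le_one h hp0).trans le_self_add
    · exact ((ENNReal.rpow_le_rpow_of_exponent_le h hp1).trans_eq (ENNReal.rpow_one _)).trans
        le_add_self

theorem integral_pos_of_forall_pos [NeZero μ] {f : α → ℝ} (hf : Integrable f μ)
    (hpos : ∀ x, 0 < f x) : 0 < ∫ x, f x ∂μ := by
  rw [integral_pos_iff_support_of_nonneg (fun x => (hpos x).le) hf,
    Function.support_eq_univ fun x => (hpos x).ne']
  exact Measure.measure_univ_pos.2 (NeZero.ne μ)

theorem lintegral_rpow_rpow_one_div_le_mul {P Q : Measure α} [IsFiniteMeasure P]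
    [IsFiniteMeasure Q] [NeZero Q] (hQP : Q ≪ P) {l : ℝ} (hl : l < 0) {Ψ : α → ℝ≥0∞}
    (hΨ : Measurable Ψ) (hΨ0 : ∀ x, Ψ x ≠ 0) (hΨtop : ∀ x, Ψ x ≠ ⊤) :
    (∫⁻ x, Ψ x ^ l ∂P) ^ (1 / l)
      ≤ (∫⁻ x, Ψ x ∂Q) * (∫⁻ x, Q.rnDeriv P x ^ (l / (l - 1)) ∂P) ^ ((1 - l) / l) := by
  have hl0 : l ≠ 0 := hl.ne
  set p := l / (l - 1) with hp
  have hp0 : 0 < p := div_pos_of_neg_of_neg hl (by linarith)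
  have hp1 : p < 1 := (div_lt_one_of_neg (by linarith)).2 (by linarith)
  set A := ∫⁻ x, Q.rnDeriv P x ^ p ∂P
  set C := ∫⁻ x, Ψ x ^ l ∂P
  have hA0 : A ≠ 0 := by
    intro h
    rw [lintegral_eq_zero_iff (by fun_prop)] at h
    have hf : Q.rnDeriv P =ᵐ[P] 0 :=
      h.mono fun x hx => (ENNReal.rpow_eq_zero_iff_of_pos hp0).1 hx
    apply NeZero.ne Q
    rw [← Measure.withDensity_rnDeriv_eq Q P hQP, withDensity_congr_ae hf, withDensity_zero]
  have hAtop : A ≠ ⊤ := lintegral_rpow_ne_top_of_lintegral_ne_top hp0.le hp1.le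
    (by rw [Measure.lintegral_rnDeriv hQP]; exact measure_ne_top Q _)
  have : NeZero P := ⟨by rintro rfl; simp [A] at hA0⟩
  have hC0 : C ≠ 0 := by
    refine ((lintegral_pos_iff_support (hΨ.pow_const l)).2 ?_).ne'
    rw [Function.support_eq_univ fun x =>
      (ENNReal.rpow_pos (pos_iff_ne_zero.2 (hΨ0 x)) (hΨtop x)).ne']
    exact Measure.measure_univ_pos.2 (NeZero.ne P)
  rcases eq_or_ne C ⊤ with hCtop | hCtop
  · rw [hCtop, ENNReal.top_rpow_of_neg (one_div_neg.2 hl)]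
    exact bot_le
  have holder := ENNReal.lintegral_Lp_mul_le_Lq_mul_Lr hp0 hp1 (r := -l)
    (by rw [hp]; field_simp; ring) P
    ((Q.measurable_rnDeriv P).mul hΨ).aemeasurable hΨ.inv.aemeasurable
  have hcancel : ∀ x, Q.rnDeriv P x * Ψ x * (Ψ x)⁻¹ = Q.rnDeriv P x := fun x =>
    ENNReal.mul_inv_cancel_right (hΨ0 x) (hΨtop x)
  have hinv : ∀ x, (Ψ x)⁻¹ ^ (-l) = Ψ x ^ l := fun x => by
    rw [ENNReal.inv_rpow, ← ENNReal.rpow_neg, neg_neg]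
  simp only [Pi.mul_apply, Pi.inv_apply, hcancel, hinv, ENNReal.rpow_one, div_one,
    lintegral_rnDeriv_mul hQP hΨ.aemeasurable] at holder
  convert ENNReal.rpow_neg_le_mul_rpow_neg_of_rpow_le_mul_rpow hA0 hAtop hC0 hCtop holder
    using 3
  · ring
  · rw [hp, one_div_div]; ring

theorem integrable_rpow_of_le_of_abs_le [IsFiniteMeasure μ] (hψ : Measurable ψ) {c M : ℝ}
    (hc : 0 < c) (hcψ : ∀ x, c ≤ ψ x) (hψM : ∀ x, |ψ x| ≤ M) (a : ℝ) :
    Integrable (fun x => ψ x ^ a) μ := by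
  refine Integrable.of_bound (hψ.pow_const a).aestronglyMeasurable (max (c ^ a) (M ^ a))
    (ae_of_all _ fun x => ?_)
  have hx : 0 < ψ x := hc.trans_le (hcψ x)
  rw [Real.norm_of_nonneg (rpow_nonneg hx.le a)]
  rcases le_total 0 a with ha | ha
  · exact le_max_of_le_right (rpow_le_rpow hx.le ((le_abs_self _).trans (hψM x)) ha)
  · exact le_max_of_le_left (rpow_le_rpow_of_nonpos hc (hcψ x) ha)

theorem ofReal_integral_rpow (hψ : ∀ x, 0 < ψ x) {a : ℝ}
    (hint : Integrable (fun x => ψ x ^ a) μ) :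
    ENNReal.ofReal (∫ x, ψ x ^ a ∂μ) = ∫⁻ x, ENNReal.ofReal (ψ x) ^ a ∂μ := by
  rw [ofReal_integral_eq_lintegral_ofReal hint
    (ae_of_all _ fun x => (rpow_pos_of_pos (hψ x) a).le)]
  exact lintegral_congr fun x => (ENNReal.ofReal_rpow_of_pos (hψ x)).symm

theorem ofReal_integral_rpow_rpow_one_div_le_mul {P Q : Measure α} [IsFiniteMeasure P]
    [IsFiniteMeasure Q] [NeZero Q] (hQP : Q ≪ P) {l : ℝ} (hl : l < 0) (hψ : Measurable ψ)
    (hψ0 : ∀ x, 0 < ψ x) (hψl : Integrable (fun x => ψ x ^ l) P) (hψQ : Integrable ψ Q) :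
    ENNReal.ofReal ((∫ x, ψ x ^ l ∂P) ^ (1 / l))
      ≤ ENNReal.ofReal (∫ x, ψ x ∂Q)
        * (∫⁻ x, Q.rnDeriv P x ^ (l / (l - 1)) ∂P) ^ ((1 - l) / l) := by
  have : NeZero P :=
    ⟨fun h => NeZero.ne Q (Measure.absolutelyContinuous_zero_iff.1 (h ▸ hQP))⟩
  rw [← ENNReal.ofReal_rpow_of_pos
      (integral_pos_of_forall_pos hψl fun x => rpow_pos_of_pos (hψ0 x) l),
    ofReal_integral_rpow hψ0 hψl,
    ofReal_integral_eq_lintegral_ofReal hψQ (ae_of_all _ fun x => (hψ0 x).le)]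
  exact lintegral_rpow_rpow_one_div_le_mul hQP hl hψ.ennreal_ofReal
    (fun x => (ENNReal.ofReal_pos.2 (hψ0 x)).ne') fun _ => ENNReal.ofReal_ne_top

theorem isProbabilityMeasure_withDensity_ofReal_div_integral {f : α → ℝ} (hf : Integrable f μ)
    (hf0 : ∀ x, 0 ≤ f x) (hZ : ∫ x, f x ∂μ ≠ 0) :
    IsProbabilityMeasure (μ.withDensity fun x => ENNReal.ofReal (f x / ∫ y, f y ∂μ)) := by
  constructor
  rw [withDensity_apply _ MeasurableSet.univ, Measure.restrict_univ,
    ← ofReal_integral_eq_lintegral_ofReal (hf.div_const _)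
      (ae_of_all _ fun x => div_nonneg (hf0 x) (integral_nonneg hf0)),
    integral_div, div_self hZ, ENNReal.ofReal_one]

theorem ofReal_integral_mul_lintegral_rnDeriv_rpow_withDensity_rpow_sub_one {P : Measure α}
    [SigmaFinite P] [NeZero P] {l : ℝ} (hl : l < 0) (hψ : Measurable ψ) (hψ0 : ∀ x, 0 < ψ x)
    (hψl : Integrable (fun x => ψ x ^ l) P) (hψl1 : Integrable (fun x => ψ x ^ (l - 1)) P) :
    ENNReal.ofReal (∫ x, ψ x ∂(P.withDensity fun x =>
          ENNReal.ofReal (ψ x ^ (l - 1) / ∫ y, ψ y ^ (l - 1) ∂P))) *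
        (∫⁻ x, ((P.withDensity fun x =>
          ENNReal.ofReal (ψ x ^ (l - 1) / ∫ y, ψ y ^ (l - 1) ∂P)).rnDeriv P x)
            ^ (l / (l - 1)) ∂P) ^ ((1 - l) / l)
      = ENNReal.ofReal ((∫ x, ψ x ^ l ∂P) ^ (1 / l)) := by
  set Z := ∫ y, ψ y ^ (l - 1) ∂P
  set I := ∫ y, ψ y ^ l ∂P
  set p := l / (l - 1) with hp
  have hl0 : l ≠ 0 := hl.ne
  have hl1 : l - 1 ≠ 0 := by linarith
  have hp0 : 0 < p := div_pos_of_neg_of_neg hl (by linarith)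
  have hZ : 0 < Z := integral_pos_of_forall_pos hψl1 fun x => rpow_pos_of_pos (hψ0 x) _
  have hI : 0 < I := integral_pos_of_forall_pos hψl fun x => rpow_pos_of_pos (hψ0 x) _
  have hdens : Measurable fun x => ENNReal.ofReal (ψ x ^ (l - 1) / Z) :=
    ((hψ.pow_const _).div_const Z).ennreal_ofReal
  have hmean : ∫ x, ψ x ∂(P.withDensity fun x => ENNReal.ofReal (ψ x ^ (l - 1) / Z))
      = I / Z := by
    rw [integral_withDensity_eq_integral_toReal_smul hdens
      (ae_of_all _ fun _ => ENNReal.ofReal_lt_top), ← integral_div]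
    refine integral_congr_ae (ae_of_all _ fun x => ?_)
    have := hψ0 x
    dsimp only
    rw [smul_eq_mul, ENNReal.toReal_ofReal (by positivity), div_mul_eq_mul_div,
      ← rpow_add_one this.ne', sub_add_cancel]
  have hpen : ∫⁻ x, ((P.withDensity fun x => ENNReal.ofReal (ψ x ^ (l - 1) / Z)).rnDeriv P x)
      ^ p ∂P = ENNReal.ofReal (I / Z ^ p) := by
    rw [lintegral_congr_ae ((Measure.rnDeriv_withDensity P hdens).mono fun x hx => by rw [hx]),
      ← integral_div, ofReal_integral_eq_lintegral_ofReal (hψl.div_const _)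
        (ae_of_all _ fun x => by have := hψ0 x; positivity)]
    refine lintegral_congr fun x => ?_
    have := hψ0 x
    rw [ENNReal.ofReal_rpow_of_nonneg (by positivity) hp0.le,
      div_rpow (by positivity) hZ.le, ← rpow_mul this.le, hp, mul_div_cancel₀ _ hl1]
  rw [hmean, hpen, ENNReal.ofReal_rpow_of_pos (by positivity),
    ← ENNReal.ofReal_mul (by positivity)]
  congr 1
  rw [div_rpow hI.le (by positivity), ← rpow_mul hZ.le,
    show p * ((1 - l) / l) = -1 by rw [hp]; field_simp; ring, rpow_neg_one,
    show 1 / l = 1 + (1 - l) / l by field_simp; ring, rpow_add hI, rpow_one]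
  field_simp

end

/-- dual representation of the power ambiguity function, `λ < 0`.
For a probability measure `P`, `λ < 0` and a bounded measurable `ψ` with
`inf ψ > 0`,
`(∫ ψ^λ dP)^{1/λ} = inf { (∫ ψ dQ)·(∫ (dQ/dP)^{λ/(λ−1)} dP)^{(1−λ)/λ} : Q prob., Q ≪ P }`.
The infimum is attained at `dQ* ∝ ψ^{λ−1} dP`. -/
theorem stmt_9
    {S : Type*} [MeasurableSpace S] (P : Measure S) [IsProbabilityMeasure P]
    (l : ℝ) (hl : l < 0)
    (ψ : S → ℝ) (hψmeas : Measurable ψ) (hψbdd : ∃ M, ∀ θ, |ψ θ| ≤ M)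
    (c : ℝ) (hc : 0 < c) (hcψ : ∀ θ, c ≤ ψ θ) :
    (ENNReal.ofReal ((∫ θ, ψ θ ^ l ∂P) ^ (1 / l))
        = ⨅ Q : {Q : Measure S // IsProbabilityMeasure Q ∧ Q ≪ P},
            (ENNReal.ofReal (∫ θ, ψ θ ∂(Q : Measure S)) *
              (∫⁻ θ, ((Q : Measure S).rnDeriv P θ) ^ (l / (l - 1)) ∂P) ^ ((1 - l) / l))) ∧
      IsProbabilityMeasure
        (P.withDensity fun θ =>
          ENNReal.ofReal (ψ θ ^ (l - 1) / ∫ θ', ψ θ' ^ (l - 1) ∂P)) ∧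
      (P.withDensity fun θ =>
          ENNReal.ofReal (ψ θ ^ (l - 1) / ∫ θ', ψ θ' ^ (l - 1) ∂P)) ≪ P ∧
      ENNReal.ofReal
            (∫ θ, ψ θ ∂(P.withDensity fun θ =>
              ENNReal.ofReal (ψ θ ^ (l - 1) / ∫ θ', ψ θ' ^ (l - 1) ∂P))) *
          (∫⁻ θ, ((P.withDensity fun θ =>
              ENNReal.ofReal (ψ θ ^ (l - 1) / ∫ θ', ψ θ' ^ (l - 1) ∂P)).rnDeriv P θ)
                ^ (l / (l - 1)) ∂P) ^ ((1 - l) / l)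
        = ENNReal.ofReal ((∫ θ, ψ θ ^ l ∂P) ^ (1 / l)) := by
  obtain ⟨M, hM⟩ := hψbdd
  have hψ0 : ∀ θ, 0 < ψ θ := fun θ => hc.trans_le (hcψ θ)
  have hint : ∀ a : ℝ, Integrable (fun θ => ψ θ ^ a) P :=
    integrable_rpow_of_le_of_abs_le hψmeas hc hcψ hM
  have hprob := isProbabilityMeasure_withDensity_ofReal_div_integral (hint (l - 1))
    (fun θ => (rpow_pos_of_pos (hψ0 θ) _).le)
    (integral_pos_of_forall_pos (hint _) fun θ => rpow_pos_of_pos (hψ0 θ) _).ne'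
  have hac := withDensity_absolutelyContinuous P
    fun θ => ENNReal.ofReal (ψ θ ^ (l - 1) / ∫ θ', ψ θ' ^ (l - 1) ∂P)
  have hvalue := ofReal_integral_mul_lintegral_rnDeriv_rpow_withDensity_rpow_sub_one hl hψmeas
    hψ0 (hint l) (hint (l - 1))
  refine ⟨le_antisymm (le_iInf fun ⟨Q, hQ, hQP⟩ => ?_)
    ((iInf_le _ ⟨_, hprob, hac⟩).trans_eq hvalue), hprob, hac, hvalue⟩
  exact ofReal_integral_rpow_rpow_one_div_le_mul hQP hl hψmeas hψ0 (hint l)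
    (Integrable.of_bound hψmeas.aestronglyMeasurable M (ae_of_all _ hM))
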